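/- arXiv:1003.1646 — 3 statements merged into one kernel-verified Lean document; each statement's English description precedes it below -/
import Mathlib

section
/- For every positive even integer n, the denominator of the Bernoulli number B_n (in lowest terms) equals the product of all primes p such that p - 1 divides n; in particular, the denominator of B_n is squarefree. -/
/-!
By von Staudt–Clausen, `B_n + ∑_{(p - 1) ∣ n} 1/p` is an integer, so `B_n` has the denominator of
a sum of reciprocals of distinct primes, which is their product.
-/

open Finset
open scoped Function

namespace Rat

theorem den_add_eq_mul_of_coprime {x y : ℚ} (h : x.den.Coprime y.den) :
    (x + y).den = x.den * y.den := by
  refine Nat.dvd_antisymm (add_den_dvd x y) (h.mul_dvd_of_dvd_of_dvd ?_ ?_)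
  · have hx : x.den ∣ (x + y).den * y.den := by
      simpa using add_den_dvd (x + y) (-y)
    exact h.dvd_of_dvd_mul_right hx
  · have hy : y.den ∣ (x + y).den * x.den := by
      simpa using add_den_dvd (x + y) (-x)
    exact h.symm.dvd_of_dvd_mul_right hy

theorem den_sum_eq_prod_den_of_pairwise_coprime {ι : Type*} {s : Finset ι} {f : ι → ℚ}
    (hs : (s : Set ι).Pairwise (Nat.Coprime on fun i => (f i).den)) :
    (∑ i ∈ s, f i).den = ∏ i ∈ s, (f i).den := by
  induction s using Finset.cons_induction with
  | empty => simp
  | cons a s ha ih =>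
    rw [coe_cons, Set.pairwise_insert] at hs
    have hcop : (f a).den.Coprime (∑ i ∈ s, f i).den := by
      rw [ih hs.1]
      exact Nat.Coprime.prod_right fun i hi => (hs.2 i hi fun h => ha (h ▸ hi)).1
    rw [sum_cons, prod_cons, den_add_eq_mul_of_coprime hcop, ih hs.1]

theorem den_sum_one_div_primes {s : Finset ℕ} (hs : ∀ p ∈ s, p.Prime) :
    (∑ p ∈ s, (1 : ℚ) / p).den = ∏ p ∈ s, p := by
  have hden : ∀ p ∈ s, ((1 : ℚ) / p).den = p := fun p hp => by
    simp [(hs p hp).ne_zero]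
  rw [den_sum_eq_prod_den_of_pairwise_coprime, prod_congr rfl hden]
  intro p hp q hq hpq
  simp only [Function.onFun, hden p hp, hden q hq]
  exact (Nat.coprime_primes (hs p hp) (hs q hq)).mpr hpq

end Rat

theorem Nat.squarefree_prod_primes {s : Finset ℕ} (hs : ∀ p ∈ s, p.Prime) :
    Squarefree (∏ p ∈ s, p) :=
  squarefree_prod_of_pairwise_isCoprime
    (fun p hp q hq hpq => Nat.coprime_iff_isRelPrime.mp <|
      (Nat.coprime_primes (hs p hp) (hs q hq)).mpr hpq)
    fun p hp => (hs p hp).prime.squarefree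

theorem bernoulli_den_eq_prod_primes_general (n : ℕ) (hne : Even n) :
    (bernoulli n).den =
      ∏ p ∈ (Finset.range (n + 2)).filter (fun p => p.Prime ∧ (p - 1) ∣ n), p ∧
    Squarefree (bernoulli n).den := by
  obtain ⟨k, rfl⟩ := hne
  rw [← two_mul]
  set P := (range (2 * k + 2)).filter (fun p => p.Prime ∧ (p - 1) ∣ 2 * k)
  have hP : ∀ p ∈ P, p.Prime := fun p hp => (mem_filter.mp hp).2.1
  obtain ⟨z, hz⟩ := Bernoulli.vonStaudt_clausen k
  have hB : bernoulli (2 * k) = z - ∑ p ∈ P, (1 : ℚ) / p := by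
    rw [hz]; ring
  have hden : (bernoulli (2 * k)).den = ∏ p ∈ P, p := by
    rw [hB, Rat.intCast_sub_den, Rat.den_sum_one_div_primes hP]
  exact ⟨hden, hden ▸ Nat.squarefree_prod_primes hP⟩

theorem bernoulli_den_eq_prod_primes (n : ℕ) (hn : 0 < n) (hne : Even n) :
    (bernoulli n).den =
      ∏ p ∈ (Finset.range (n + 2)).filter (fun p => p.Prime ∧ (p - 1) ∣ n), p ∧
    Squarefree (bernoulli n).den :=
  bernoulli_den_eq_prod_primes_general n hne
end

section
/- Let k and m be positive integers with k even, and write B_k = N_k/D_k in lowest terms with D_k > 0. For r = 1: m^2 divides S_k(m) if and only if m divides N_k. -/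
/-!
With `B_k = N / D`, Faulhaber's formula gives
`D S_k(m) - N m = ∑_{i<k} D B_i C(k,i) m^(k+1-i) / (k+1-i)`,
and every summand has `p`-adic norm at most `|m|_p²` for each prime `p ∣ m`. For even `i` the
exponent `j = k+1-i` is odd and at least `3`, so `v_p(j) ≤ j - 2`, and even `v_p(j) ≤ j - 3` when
`p ≥ 5`. By von Staudt–Clausen `p B_i` is `p`-integral and `6 ∣ D`, so `D B_i` is `p`-integral for
`p = 2, 3` and has at most one `p` in its denominator otherwise. The summand `i = 1` is
`-(D/2) m^k`, and those with odd `i ≥ 3` vanish. Hence `D S_k(m) ≡ N m (mod m²)`, and because `N`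
and `D` are coprime, `m² ∣ S_k(m)` exactly when `m ∣ N`.
-/

open Finset

def S (k m : ℕ) : ℕ := ∑ j ∈ Finset.Ico 1 m, j ^ k

lemma sum_range_pow_eq_bernoulli_mul_add (k m : ℕ) :
    ∑ i ∈ range m, (i : ℚ) ^ k = bernoulli k * m +
      ∑ i ∈ range k, bernoulli i * k.choose i * m ^ (k + 1 - i) / (k + 1 - i : ℕ) := by
  rw [sum_range_pow, sum_range_succ, add_comm, Nat.choose_succ_self_right,
    Nat.add_sub_cancel_left, pow_one]
  congr 1
  · push_cast; field_simp
  · refine sum_congr rfl fun i hi ↦ ?_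
    have hik : i < k := mem_range.mp hi
    have hchoose : (k.choose i : ℚ) * (k + 1) = (k + 1).choose i * (k + 1 - i : ℕ) := by
      exact_mod_cast Nat.choose_mul_succ_eq k i
    rw [div_eq_div_iff (by positivity) (by exact_mod_cast (show k + 1 - i ≠ 0 by omega))]
    linear_combination -(bernoulli i * (m : ℚ) ^ (k + 1 - i)) * hchoose

lemma S_eq_sum_range {k : ℕ} (hk : 0 < k) (m : ℕ) :
    (S k m : ℚ) = ∑ i ∈ range m, (i : ℚ) ^ k := by
  rcases Nat.eq_zero_or_pos m with rfl | hm
  · simp [S]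
  · rw [sum_range_eq_add_Ico _ hm, S]
    simp [hk.ne']

lemma den_mul_S_sub_num_mul_eq {k : ℕ} (hk : 0 < k) (m : ℕ) :
    (((bernoulli k).den * S k m - (bernoulli k).num * m : ℤ) : ℚ) =
      ∑ i ∈ range k,
        (bernoulli k).den * bernoulli i * k.choose i * m ^ (k + 1 - i) / (k + 1 - i : ℕ) := by
  push_cast
  rw [← Rat.mul_den_eq_num, S_eq_sum_range hk, sum_range_pow_eq_bernoulli_mul_add, mul_add,
    mul_sum]
  simp only [mul_assoc, mul_div_assoc]
  ring

lemma dvd_of_forall_padicNorm_le {a : ℕ} {b : ℤ}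
    (h : ∀ p, p.Prime → p ∣ a → padicNorm p b ≤ padicNorm p a) : (a : ℤ) ∣ b := by
  rw [← Int.dvd_natAbs, Int.natCast_dvd_natCast, Nat.dvd_iff_prime_pow_dvd_dvd]
  intro p n hp hpn
  have : Fact p.Prime := ⟨hp⟩
  rcases Nat.eq_zero_or_pos n with rfl | hn
  · simp
  have ha := padicNorm.dvd_iff_norm_le.mp (Int.natCast_dvd_natCast.mpr hpn)
  rw [Int.cast_natCast] at ha
  have hb := padicNorm.dvd_iff_norm_le.mpr ((h p hp ((dvd_pow_self p hn.ne').trans hpn)).trans ha)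
  rwa [← Int.dvd_natAbs, Int.natCast_dvd_natCast] at hb

section Padic

variable {p : ℕ} [hp : Fact p.Prime]

lemma padicNorm_inv_self : padicNorm p (p : ℚ)⁻¹ = p := by
  rw [inv_eq_one_div, padicNorm.div, padicNorm.one, padicNorm.padicNorm_p_of_prime, one_div,
    inv_inv]

lemma padicNorm_bernoulli_add_inv_le_one {k : ℕ} (hk : 0 < k) :
    padicNorm p (bernoulli (2 * k) + if (p - 1) ∣ 2 * k then (p : ℚ)⁻¹ else 0) ≤ 1 := by
  obtain ⟨T, hT⟩ := Bernoulli.vonStaudt_clausen k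
  set F := (range (2 * k + 2)).filter fun q ↦ q.Prime ∧ (q - 1) ∣ 2 * k
  have hpF : p ∈ F ↔ (p - 1) ∣ 2 * k := by
    refine ⟨fun h ↦ (mem_filter.mp h).2.2, fun h ↦ mem_filter.mpr ⟨?_, hp.out, h⟩⟩
    have := Nat.le_of_dvd (by omega) h
    rw [mem_range]; omega
  have hsplit : ∑ q ∈ F, (1 : ℚ) / q =
      (if (p - 1) ∣ 2 * k then (p : ℚ)⁻¹ else 0) +
        ∑ q ∈ F with q ≠ p, (1 : ℚ) / q := by
    rw [← sum_filter_add_sum_filter_not F (· = p), sum_filter, sum_ite_eq', one_div]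
    simp only [hpF]
  have hrest : ∀ q ∈ F.filter (· ≠ p), padicNorm p ((1 : ℚ) / q) ≤ 1 := by
    intro q hq
    obtain ⟨hqF, hqp⟩ := mem_filter.mp hq
    have hq : q.Prime := (mem_filter.mp hqF).2.1
    have hpq : ¬ p ∣ q := fun h ↦ hqp ((Nat.prime_dvd_prime_iff_eq hp.out hq).mp h).symm
    rw [padicNorm.div, padicNorm.one, (padicNorm.nat_eq_one_iff q).mpr hpq, div_one]
  rw [show bernoulli (2 * k) + _ = T - ∑ q ∈ F with q ≠ p, (1 : ℚ) / q by
    rw [hT, hsplit]; ring]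
  exact padicNorm.sub.trans (max_le (padicNorm.of_int T) (padicNorm.sum_le' hrest zero_le_one))

lemma padicNorm_bernoulli_le_of_even {n : ℕ} (hn : Even n) : padicNorm p (bernoulli n) ≤ p := by
  have hp1 : (1 : ℚ) ≤ p := by exact_mod_cast hp.out.one_lt.le
  obtain ⟨k, rfl⟩ := hn
  rw [← two_mul]
  rcases Nat.eq_zero_or_pos k with rfl | hk
  · simpa using hp1
  have h := padicNorm_bernoulli_add_inv_le_one (p := p) hk
  split_ifs at h
  · calc padicNorm p (bernoulli (2 * k))
          = padicNorm p ((bernoulli (2 * k) + (p : ℚ)⁻¹) - (p : ℚ)⁻¹) := by ring_nf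
        _ ≤ max 1 (padicNorm p (p : ℚ)⁻¹) := padicNorm.sub.trans (max_le_max_right _ h)
        _ ≤ p := by
          rw [padicNorm_inv_self]; exact max_le hp1 le_rfl
  · simpa using h.trans hp1

lemma padicNorm_bernoulli_eq_of_sub_one_dvd {n : ℕ} (hn : Even n) (hn0 : 0 < n)
    (hpn : (p - 1) ∣ n) :
    padicNorm p (bernoulli n) = p := by
  obtain ⟨k, rfl⟩ := hn
  rw [← two_mul] at hpn ⊢
  have h := padicNorm_bernoulli_add_inv_le_one (p := p) (k := k) (by omega)
  rw [if_pos hpn] at h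
  have hlt : padicNorm p (bernoulli (2 * k) + (p : ℚ)⁻¹) < padicNorm p (-(p : ℚ)⁻¹) := by
    rw [padicNorm.neg, padicNorm_inv_self]; exact h.trans_lt (by exact_mod_cast hp.out.one_lt)
  calc padicNorm p (bernoulli (2 * k))
        = padicNorm p ((bernoulli (2 * k) + (p : ℚ)⁻¹) + -(p : ℚ)⁻¹) := by ring_nf
      _ = p := by
        rw [padicNorm.add_eq_max_of_ne hlt.ne, max_eq_right hlt.le, padicNorm.neg,
          padicNorm_inv_self]

lemma dvd_den_bernoulli_of_sub_one_dvd {n : ℕ} (hn : Even n) (hn0 : 0 < n) (hpn : (p - 1) ∣ n) :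
    p ∣ (bernoulli n).den := by
  have h := padicNorm_bernoulli_eq_of_sub_one_dvd (p := p) hn hn0 hpn
  rw [← Rat.num_div_den (bernoulli n), padicNorm.div] at h
  have hden : 0 < padicNorm p ((bernoulli n).den : ℚ) :=
    (padicNorm.nonneg _).lt_of_ne' (padicNorm.nonzero (by exact_mod_cast (bernoulli n).den_nz))
  rw [← padicNorm.nat_lt_one_iff (p := p)]
  by_contra! hge
  have : padicNorm p (bernoulli n).num / padicNorm p (bernoulli n).den ≤ 1 :=
    (div_le_one hden).mpr ((padicNorm.of_int _).trans hge)
  rw [h] at this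
  exact this.not_gt (by exact_mod_cast hp.out.one_lt)

lemma padicValNat_add_le_of_lt_of_le {c j : ℕ} (hc : c < p) (hj : c ≤ j) :
    padicValNat p j + c ≤ j := by
  rcases Nat.eq_zero_or_pos (padicValNat p j) with ht | ht
  · omega
  have hj0 : j ≠ 0 := by rintro rfl; simp at ht
  have hpow : p ^ padicValNat p j ≤ j := Nat.le_of_dvd (by omega) pow_padicValNat_dvd
  have hgrowth : ∀ s, 1 ≤ s → s + c ≤ p ^ s := by
    intro s hs
    induction s, hs using Nat.le_induction with
    | base => simpa [add_comm] using hc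
    | succ s hs ih => rw [pow_succ]; nlinarith [hp.out.two_le]
  exact (hgrowth _ ht).trans hpow

lemma padicValNat_add_two_le_of_odd {j : ℕ} (hj : Odd j) (h3 : 3 ≤ j) :
    padicValNat p j + 2 ≤ j := by
  rcases hp.out.eq_two_or_odd with rfl | hodd
  · rw [padicValNat.eq_zero_of_not_dvd (by rwa [← even_iff_two_dvd, Nat.not_even_iff_odd])]
    omega
  · exact padicValNat_add_le_of_lt_of_le (by have := hp.out.two_le; omega) (by omega)

lemma padicNorm_mul_pow_div_le {b : ℚ} {c e j m : ℕ} (hb : padicNorm p b ≤ p ^ e)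
    (hm : p ∣ m) (hj : e + padicValNat p j + 2 ≤ j) :
    padicNorm p (b * c * m ^ j / j) ≤ padicNorm p m ^ 2 := by
  have hp0 : (0 : ℚ) < p := by exact_mod_cast hp.out.pos
  have hjnorm : padicNorm p j = ((p : ℚ) ^ padicValNat p j)⁻¹ := by
    rw [padicNorm.eq_zpow_of_nonzero (by exact_mod_cast (show j ≠ 0 by omega)),
      padicValRat.of_nat, zpow_neg, zpow_natCast]
  have hm : p * padicNorm p m ≤ 1 := by
    have := (padicNorm.dvd_iff_norm_le (n := 1) (z := m)).mp
      (Int.natCast_dvd_natCast.mpr (by simpa using hm))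
    rw [Int.cast_natCast, Nat.cast_one, zpow_neg_one] at this
    calc p * padicNorm p m ≤ p * (p : ℚ)⁻¹ := by gcongr
      _ = 1 := mul_inv_cancel₀ hp0.ne'
  have hm1 : padicNorm p m ≤ 1 := padicNorm.of_nat m
  obtain ⟨d, hd⟩ : ∃ d, j = e + padicValNat p j + d + 2 :=
    ⟨j - (e + padicValNat p j + 2), by omega⟩
  calc padicNorm p (b * c * m ^ j / j)
      = padicNorm p b * padicNorm p c * p ^ padicValNat p j *
          padicNorm p m ^ (e + padicValNat p j + d) * padicNorm p m ^ 2 := by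
        rw [padicNorm.div, padicNorm.mul, padicNorm.mul, IsAbsoluteValue.abv_pow (padicNorm p),
          hjnorm, div_inv_eq_mul]
        nth_rw 1 [hd]
        ring
    _ ≤ p ^ e * 1 * p ^ padicValNat p j * padicNorm p m ^ (e + padicValNat p j) *
          padicNorm p m ^ 2 := by
        have hc : padicNorm p c ≤ 1 := padicNorm.of_nat c
        have hpow := pow_le_pow_of_le_one (padicNorm.nonneg (p := p) m) hm1
          (show e + padicValNat p j ≤ e + padicValNat p j + d by omega)
        gcongr
        · exact pow_nonneg (padicNorm.nonneg _) _
        · exact padicNorm.nonneg _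
    _ = (p * padicNorm p m) ^ (e + padicValNat p j) * padicNorm p m ^ 2 := by ring
    _ ≤ padicNorm p m ^ 2 := by
        exact mul_le_of_le_one_left (sq_nonneg _)
          (pow_le_one₀ (mul_nonneg hp0.le (padicNorm.nonneg _)) hm)

lemma padicNorm_den_mul_faulhaber_term_le_of_even {k m i : ℕ} (hke : Even k) (hk : 0 < k)
    (hi : i < k) (hie : Even i) (hm : p ∣ m) :
    padicNorm p ((bernoulli k).den * bernoulli i * k.choose i * m ^ (k + 1 - i) / (k + 1 - i : ℕ))
      ≤ padicNorm p m ^ 2 := by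
  have hp0 : (0 : ℚ) < p := by exact_mod_cast hp.out.pos
  have hodd : Odd (k + 1 - i) := by
    obtain ⟨a, rfl⟩ := hke; obtain ⟨b, rfl⟩ := hie; exact ⟨a - b, by omega⟩
  have h3 : 3 ≤ k + 1 - i := by
    obtain ⟨a, rfl⟩ := hke; obtain ⟨b, rfl⟩ := hie; omega
  have hB := padicNorm_bernoulli_le_of_even (p := p) hie
  have h4 : p ≠ 4 := by rintro rfl; exact absurd hp.out (by decide)
  rcases (show p ≤ 3 ∨ 5 ≤ p by omega) with hp3 | hp5
  · have hpk : p - 1 ∣ k := by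
      rcases (show p - 1 = 1 ∨ p - 1 = 2 by have := hp.out.two_le; omega) with h | h <;>
        simp [h, ← even_iff_two_dvd, hke]
    have hD : padicNorm p (bernoulli k).den ≤ (p : ℚ)⁻¹ := by
      simpa using (padicNorm.dvd_iff_norm_le (n := 1) (z := (bernoulli k).den)).mp
        (by simpa using Int.natCast_dvd_natCast.mpr (dvd_den_bernoulli_of_sub_one_dvd hke hk hpk))
    refine padicNorm_mul_pow_div_le (e := 0) ?_ hm
      (by simpa using padicValNat_add_two_le_of_odd hodd h3)
    rw [padicNorm.mul, pow_zero]
    calc _ ≤ (p : ℚ)⁻¹ * p := mul_le_mul hD hB (padicNorm.nonneg _) (inv_nonneg.mpr hp0.le)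
      _ = 1 := inv_mul_cancel₀ hp0.ne'
  · refine padicNorm_mul_pow_div_le (e := 1) ?_ hm ?_
    · rw [padicNorm.mul, pow_one]
      exact (mul_le_mul (padicNorm.of_nat _) hB (padicNorm.nonneg _) zero_le_one).trans_eq
        (one_mul _)
    · have := padicValNat_add_le_of_lt_of_le (p := p) (c := 3) (by omega) h3
      omega

lemma padicNorm_den_mul_faulhaber_term_one_le {k m : ℕ} (hke : Even k) (hk : 0 < k) :
    padicNorm p ((bernoulli k).den * bernoulli 1 * k.choose 1 * m ^ (k + 1 - 1) / (k + 1 - 1 : ℕ))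
      ≤ padicNorm p m ^ 2 := by
  obtain ⟨d, hd⟩ : 2 ∣ (bernoulli k).den := dvd_den_bernoulli_of_sub_one_dvd hke hk (by simp)
  have hterm : ((bernoulli k).den * bernoulli 1 * k.choose 1 * m ^ (k + 1 - 1) /
      (k + 1 - 1 : ℕ) : ℚ) = -(d * m ^ k) := by
    simp only [Nat.add_sub_cancel, bernoulli_one, Nat.choose_one_right, hd]
    field_simp
    push_cast
    ring
  rw [hterm, padicNorm.neg, padicNorm.mul, IsAbsoluteValue.abv_pow (padicNorm p)]
  have hk2 : 2 ≤ k := by obtain ⟨a, rfl⟩ := hke; omega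
  exact (mul_le_mul (padicNorm.of_nat d)
    (pow_le_pow_of_le_one (padicNorm.nonneg _) (padicNorm.of_nat m) hk2)
    (pow_nonneg (padicNorm.nonneg _) _) zero_le_one).trans_eq (one_mul _)

lemma padicNorm_den_mul_faulhaber_term_le {k m i : ℕ} (hke : Even k) (hk : 0 < k) (hi : i < k)
    (hm : p ∣ m) :
    padicNorm p ((bernoulli k).den * bernoulli i * k.choose i * m ^ (k + 1 - i) / (k + 1 - i : ℕ))
      ≤ padicNorm p m ^ 2 := by
  rcases Nat.even_or_odd i with hie | ⟨c, rfl⟩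
  · exact padicNorm_den_mul_faulhaber_term_le_of_even hke hk hi hie hm
  rcases Nat.eq_zero_or_pos c with rfl | hc
  · exact padicNorm_den_mul_faulhaber_term_one_le hke hk
  · rw [bernoulli_eq_zero_of_odd ⟨c, rfl⟩ (by omega)]
    simpa using sq_nonneg _

end Padic

theorem sq_dvd_den_mul_S_sub_num_mul {k : ℕ} (hk : 0 < k) (hke : Even k) (m : ℕ) :
    (m : ℤ) ^ 2 ∣ (bernoulli k).den * S k m - (bernoulli k).num * m := by
  rw [← Nat.cast_pow]
  refine dvd_of_forall_padicNorm_le fun p hp hpm ↦ ?_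
  have : Fact p.Prime := ⟨hp⟩
  rw [den_mul_S_sub_num_mul_eq hk, Nat.cast_pow, IsAbsoluteValue.abv_pow (padicNorm p)]
  exact padicNorm.sum_le' (fun i hi ↦ padicNorm_den_mul_faulhaber_term_le hke hk
    (mem_range.mp hi) (hp.dvd_of_dvd_pow hpm)) (sq_nonneg _)

theorem sq_dvd_S_iff_dvd_num (k m : ℕ) (hk : 0 < k) (hke : Even k) (hm : 0 < m) :
    m ^ 2 ∣ S k m ↔ (m : ℤ) ∣ (bernoulli k).num := by
  have hcong := sq_dvd_den_mul_S_sub_num_mul hk hke m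
  rw [← Int.natCast_dvd_natCast, Nat.cast_pow]
  constructor
  · intro h
    have hnum : (m : ℤ) * m ∣ (bernoulli k).num * m := by
      rw [← sq]; exact (dvd_sub_right (h.mul_left _)).mp hcong
    exact (mul_dvd_mul_iff_right (by exact_mod_cast hm.ne')).mp hnum
  · intro h
    have hden : (m : ℤ) ^ 2 ∣ (bernoulli k).den * S k m :=
      (dvd_sub_left (by rw [sq]; exact mul_dvd_mul_right h _)).mp hcong
    have hcop : IsCoprime ((m : ℤ) ^ 2) (bernoulli k).den :=
      ((Rat.isCoprime_num_den _).of_isCoprime_of_dvd_left h).pow_left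
    exact hcop.dvd_of_dvd_mul_left hden
end

section
/- For even k ∈ {2, 4, 6, 8}, the numerator of B_k has absolute value 1, and for every integer m ≥ 2, gcd(S_k(m), m^k) ≤ m; moreover gcd(S_k(m), m^k) = m whenever gcd(m, denom(B_k)) = 1. -/
open Finset

theorem bernoulli'_six : bernoulli' 6 = 1 / 42 := by
  rw [bernoulli'_def]
  norm_num [sum_range_succ, bernoulli'_eq_zero_of_odd (n := 5) (by decide), Nat.choose]

theorem bernoulli'_eight : bernoulli' 8 = -1 / 30 := by
  rw [bernoulli'_def]
  norm_num [sum_range_succ, bernoulli'_eq_zero_of_odd (n := 5) (by decide),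
    bernoulli'_eq_zero_of_odd (n := 7) (by decide), bernoulli'_six, Nat.choose]

theorem S_succ {k : ℕ} (hk : k ≠ 0) (n : ℕ) : S k (n + 1) = S k n + n ^ k := by
  rcases n with _ | n
  · simp [S, hk]
  · rw [S, S, sum_Ico_succ_top (by omega)]

theorem six_mul_S_two (m : ℕ) : (6 : ℤ) * S 2 m = m * (1 + m * (2 * m - 3)) := by
  induction m with
  | zero => simp [S]
  | succ n ih => rw [S_succ two_ne_zero]; push_cast; linear_combination ih

theorem thirty_mul_S_four (m : ℕ) :
    (30 : ℤ) * S 4 m = m * (-1 + m * (6 * m ^ 3 - 15 * m ^ 2 + 10 * m)) := by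
  induction m with
  | zero => simp [S]
  | succ n ih => rw [S_succ four_ne_zero]; push_cast; linear_combination ih

theorem fortyTwo_mul_S_six (m : ℕ) :
    (42 : ℤ) * S 6 m = m * (1 + m * (6 * m ^ 5 - 21 * m ^ 4 + 21 * m ^ 3 - 7 * m)) := by
  induction m with
  | zero => simp [S]
  | succ n ih => rw [S_succ (by norm_num)]; push_cast; linear_combination ih

theorem ninety_mul_S_eight (m : ℕ) : (90 : ℤ) * S 8 m =
    m * (-3 + m * (10 * m ^ 7 - 45 * m ^ 6 + 60 * m ^ 5 - 42 * m ^ 3 + 20 * m)) := by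
  induction m with
  | zero => simp [S]
  | succ n ih => rw [S_succ (by norm_num)]; push_cast; linear_combination ih

theorem exists_thirty_mul_S_eight (m : ℕ) : ∃ q : ℤ, (30 : ℤ) * S 8 m = m * (-1 + m * q) := by
  -- Modulo 3 the cofactor in `ninety_mul_S_eight` is `m ^ 7 - m`, which vanishes by Fermat.
  obtain ⟨q, hq⟩ : (3 : ℤ) ∣ 10 * m ^ 7 - 45 * m ^ 6 + 60 * m ^ 5 - 42 * m ^ 3 + 20 * m := by
    refine (ZMod.intCast_zmod_eq_zero_iff_dvd _ 3).mp ?_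
    push_cast
    generalize (m : ZMod 3) = a
    revert a
    decide
  refine ⟨q, mul_left_cancel₀ (three_ne_zero (α := ℤ)) ?_⟩
  linear_combination ninety_mul_S_eight m + (m : ℤ) ^ 2 * hq

theorem Nat.gcd_pow_dvd_of_mul_eq {s m D : ℕ} {N q : ℤ} (hN : IsCoprime (m : ℤ) N)
    (h : (D : ℤ) * s = m * (N + m * q)) (k : ℕ) : Nat.gcd s (m ^ k) ∣ m := by
  have hcop : IsCoprime ((Nat.gcd s (m ^ k) : ℕ) : ℤ) (N + m * q) :=
    (hN.add_mul_left_right q).pow_left.of_isCoprime_of_dvd_left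
      (by exact_mod_cast Nat.gcd_dvd_right s (m ^ k))
  have hdvd : ((Nat.gcd s (m ^ k) : ℕ) : ℤ) ∣ m * (N + m * q) :=
    h ▸ (Int.natCast_dvd_natCast.mpr (Nat.gcd_dvd_left s (m ^ k))).mul_left _
  exact Int.natCast_dvd_natCast.mp (hcop.dvd_of_dvd_mul_right hdvd)

theorem Nat.gcd_pow_eq_of_mul_eq {s m D k : ℕ} {N q : ℤ} (hk : k ≠ 0) (hN : IsCoprime (m : ℤ) N)
    (hD : Nat.Coprime m D) (h : (D : ℤ) * s = m * (N + m * q)) : Nat.gcd s (m ^ k) = m := by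
  have hms : m ∣ s := by
    have : (m : ℤ) ∣ D * s := h ▸ dvd_mul_right _ _
    exact Int.natCast_dvd_natCast.mp ((Nat.isCoprime_iff_coprime.mpr hD).dvd_of_dvd_mul_left this)
  exact (Nat.gcd_pow_dvd_of_mul_eq hN h k).antisymm (Nat.dvd_gcd hms (dvd_pow_self m hk))

theorem gcd_S_pow_of_bernoulli_eq {k D : ℕ} {N : ℤ} (hk : k ≠ 0) (hD : D ≠ 0) (hN : N.natAbs = 1)
    (hB : bernoulli k = N / D) (hS : ∀ m : ℕ, ∃ q : ℤ, (D : ℤ) * S k m = m * (N + m * q)) :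
    (bernoulli k).num.natAbs = 1 ∧
      ∀ m : ℕ, 2 ≤ m →
        Nat.gcd (S k m) (m ^ k) ≤ m ∧
          (Nat.gcd m (bernoulli k).den = 1 → Nat.gcd (S k m) (m ^ k) = m) := by
  have hcop : Nat.Coprime N.natAbs (D : ℤ).natAbs := by simp [hN]
  have hD0 : (0 : ℤ) < D := by positivity
  have hnum : (bernoulli k).num = N := by
    rw [hB, ← Int.cast_natCast, Rat.num_div_eq_of_coprime hD0 hcop]
  have hden : (bernoulli k).den = D := by
    rw [hB, ← Int.cast_natCast, ← Int.natCast_inj, Rat.den_div_eq_of_coprime hD0 hcop]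
  refine ⟨hnum ▸ hN, fun m hm => ?_⟩
  obtain ⟨q, hq⟩ := hS m
  have hNm : IsCoprime (m : ℤ) N :=
    isCoprime_one_right.of_isCoprime_of_dvd_right (Int.isUnit_iff_natAbs_eq.mpr hN).dvd
  rw [hden]
  exact ⟨Nat.le_of_dvd (by omega) (Nat.gcd_pow_dvd_of_mul_eq hNm hq k),
    fun h => Nat.gcd_pow_eq_of_mul_eq hk hNm h hq⟩

theorem max_g_eq_one_for_small_k (k : ℕ) (hk : k ∈ ({2, 4, 6, 8} : Finset ℕ)) :
    (bernoulli k).num.natAbs = 1 ∧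
      ∀ m : ℕ, 2 ≤ m →
        Nat.gcd (S k m) (m ^ k) ≤ m ∧
          (Nat.gcd m (bernoulli k).den = 1 → Nat.gcd (S k m) (m ^ k) = m) := by
  fin_cases hk
  · exact gcd_S_pow_of_bernoulli_eq (N := 1) (D := 6) two_ne_zero (by norm_num) rfl
      (by rw [bernoulli_two]; norm_num) fun m => ⟨_, six_mul_S_two m⟩
  · exact gcd_S_pow_of_bernoulli_eq (N := -1) (D := 30) four_ne_zero (by norm_num) rfl
      (by rw [bernoulli_eq_bernoulli'_of_ne_one (by norm_num), bernoulli'_four]; norm_num)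
      fun m => ⟨_, thirty_mul_S_four m⟩
  · exact gcd_S_pow_of_bernoulli_eq (N := 1) (D := 42) (by norm_num) (by norm_num) rfl
      (by rw [bernoulli_eq_bernoulli'_of_ne_one (by norm_num), bernoulli'_six]; norm_num)
      fun m => ⟨_, fortyTwo_mul_S_six m⟩
  · exact gcd_S_pow_of_bernoulli_eq (N := -1) (D := 30) (by norm_num) (by norm_num) rfl
      (by rw [bernoulli_eq_bernoulli'_of_ne_one (by norm_num), bernoulli'_eight]; norm_num)
      exists_thirty_mul_S_eight
end
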